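/- Let q = 2^m. Define M = {c ∈ F_{q^2} : Tr_{F_q/F_2}(c^{q+1}) = 0} and N = {a ∈ F_{q^2} : ∃ s ∈ F_{q^2}, s^{q+1} ≠ 1 and a = s^q/(1 + s^{q+1})}. Then M = N. -/

import Mathlib

/-!
Let `q = 2 ^ m` and `N x = x ^ (q + 1)`, which lies in `𝔽_q`. If `t = N s ≠ 1`, then
`N (s ^ q / (1 + t)) = t / (1 + t) ^ 2 = u ^ 2 + u` with `u = t / (1 + t) ∈ 𝔽_q`, and the trace of
`u ^ 2 + u` telescopes to `u ^ q + u = 0`. Conversely, on `𝔽_{q²}` the image of the two-to-one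
map `u ↦ u ^ 2 + u` fills the kernel of the absolute trace, a polynomial of degree `q² / 2`, and
this kernel contains `𝔽_q`. So if `Tr (N c) = 0` and `c ≠ 0`, some `u` has `u ^ 2 + u = N c`;
telescoping again gives `u ^ q = u`, and `s = u / c` works because `1 + N s = u / N c`.
-/
open Finset Polynomial

theorem Polynomial.card_le_natDegree_of_forall_eval_eq_zero {R : Type*} [CommRing R] [IsDomain R]
    {p : R[X]} (hp : p ≠ 0) {s : Finset R} (hs : ∀ x ∈ s, p.eval x = 0) : #s ≤ p.natDegree :=
  card_le_degree_of_subset_roots fun x hx => (mem_roots hp).2 (hs x hx)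

theorem Finset.image_univ_eq_of_card_fiber_le {α β : Type*} [Fintype α] [DecidableEq β]
    {f : α → β} {t : Finset β} {k : ℕ} (hmaps : ∀ a, f a ∈ t)
    (hfiber : ∀ b, #{a | f a = b} ≤ k) (hcard : k * #t < Fintype.card α + k) :
    univ.image f = t := by
  have hsub : univ.image f ⊆ t := by simpa [subset_iff] using hmaps
  refine eq_of_subset_of_card_le hsub (not_lt.1 fun hlt => hcard.not_ge ?_)
  calc Fintype.card α + k ≤ k * #(univ.image f) + k :=
        Nat.add_le_add_right (card_le_mul_card_image univ k fun b _ => hfiber b) k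
    _ = k * (#(univ.image f) + 1) := by ring
    _ ≤ k * #t := Nat.mul_le_mul_left k hlt

theorem pos_of_card_eq_two_pow {α : Type*} [Fintype α] [Nontrivial α] {n : ℕ}
    (hcard : Fintype.card α = 2 ^ n) : 0 < n := by
  refine Nat.pos_of_ne_zero ?_
  rintro rfl
  exact (Fintype.one_lt_card (α := α)).ne' (by simpa using hcard)

theorem charP_two_of_card_eq_two_pow {F : Type*} [Field F] [Fintype F] {n : ℕ}
    (hcard : Fintype.card F = 2 ^ n) : CharP F 2 := by
  refine ringChar.of_eq (FiniteField.even_card_iff_char_two.2 ?_)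
  rw [hcard, Nat.pow_mod, Nat.mod_self, zero_pow (pos_of_card_eq_two_pow hcard).ne', Nat.zero_mod]

-- On a field with `2 ^ n` elements, `absTrace n` is the absolute trace `Tr_{𝔽_{2^n}/𝔽_2}`.
def absTrace {R : Type*} [CommSemiring R] (n : ℕ) (x : R) : R :=
  ∑ i ∈ range n, x ^ 2 ^ i

section CharTwo

variable {R : Type*} [CommRing R] [CharP R 2]

theorem absTrace_sq_add_self (n : ℕ) (u : R) : absTrace n (u ^ 2 + u) = u ^ 2 ^ n + u := by
  have hterm : ∀ i, (u ^ 2 + u) ^ 2 ^ i = u ^ 2 ^ (i + 1) - u ^ 2 ^ i := fun i => by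
    rw [CharTwo.sub_eq_add, pow_succ' 2 i, pow_mul, add_pow_char_pow]
  simp only [absTrace, hterm]
  rw [sum_range_sub (fun i => u ^ 2 ^ i), pow_zero, pow_one, CharTwo.sub_eq_add]

theorem absTrace_two_mul_eq_zero {m : ℕ} {w : R} (hw : w ^ 2 ^ m = w) :
    absTrace (2 * m) w = 0 := by
  have hshift : ∀ i, w ^ 2 ^ (m + i) = w ^ 2 ^ i := fun i => by rw [pow_add, pow_mul, hw]
  simp only [absTrace, two_mul, sum_range_add, hshift, CharTwo.add_self_eq_zero]

end CharTwo

theorem card_le_of_forall_absTrace_eq_zero {R : Type*} [CommRing R] [IsDomain R] {n : ℕ}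
    (hn : n ≠ 0) {s : Finset R} (hs : ∀ x ∈ s, absTrace n x = 0) : #s ≤ 2 ^ (n - 1) := by
  obtain ⟨k, rfl⟩ := Nat.exists_eq_succ_of_ne_zero hn
  set low : R[X] := ∑ i ∈ range k, X ^ 2 ^ i
  have hlow : low.degree < (X ^ 2 ^ k : R[X]).degree := by
    rw [degree_X_pow]
    refine (degree_sum_le _ _).trans_lt
      ((Finset.sup_lt_iff (WithBot.bot_lt_coe _)).2 fun i hi => ?_)
    rw [degree_X_pow]
    exact_mod_cast Nat.pow_lt_pow_right one_lt_two (mem_range.1 hi)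
  have hne : (X ^ 2 ^ k + low : R[X]) ≠ 0 := (monic_X_pow_add (by simpa using hlow)).ne_zero
  have hdeg := natDegree_add_eq_left_of_degree_lt hlow
  rw [natDegree_X_pow] at hdeg
  refine hdeg ▸ card_le_natDegree_of_forall_eval_eq_zero hne fun x hx => ?_
  simpa [low, eval_finsetSum, absTrace, sum_range_succ, add_comm] using hs x hx


theorem exists_sq_add_self_eq_of_absTrace_eq_zero {F : Type*} [Field F] [Fintype F] [CharP F 2]
    {n : ℕ} (hcard : Fintype.card F = 2 ^ n) {w : F} (hw : absTrace n w = 0) :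
    ∃ u, u ^ 2 + u = w := by
  classical
  have hn := pos_of_card_eq_two_pow hcard
  have hmaps : ∀ u : F, u ^ 2 + u ∈ ({x | absTrace n x = 0} : Finset F) := fun u => by
    simp [absTrace_sq_add_self, ← hcard, FiniteField.pow_card, CharTwo.add_self_eq_zero]
  have hfiber : ∀ b : F, #{u | u ^ 2 + u = b} ≤ 2 := fun b => by
    have hdeg : (X ^ 2 + X - C b : F[X]).natDegree = 2 := by compute_degree!
    refine (card_le_natDegree_of_forall_eval_eq_zero (ne_zero_of_natDegree_gt
      (hdeg ▸ one_lt_two)) fun u hu => ?_).trans hdeg.le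
    simpa [sub_eq_zero] using hu
  have hcount : 2 * #({x | absTrace n x = 0} : Finset F) < Fintype.card F + 2 := by
    have := card_le_of_forall_absTrace_eq_zero (R := F) hn.ne' (s := {x | absTrace n x = 0})
      (by simp)
    rw [hcard, ← Nat.two_pow_pred_add_two_pow_pred hn]
    omega
  have hw' : w ∈ univ.image fun u : F => u ^ 2 + u := by
    rw [image_univ_eq_of_card_fiber_le hmaps hfiber hcount]
    simpa using hw
  simpa using hw'

section QuadraticExtension

variable {F : Type*} [Field F] [Fintype F] {m : ℕ} (hcard : Fintype.card F = 2 ^ (2 * m))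
include hcard

theorem pow_two_pow_pow_two_pow (x : F) : (x ^ 2 ^ m) ^ 2 ^ m = x := by
  rw [← pow_mul, ← pow_add, ← two_mul, ← hcard, FiniteField.pow_card]

theorem pow_two_pow_add_one_pow_two_pow (x : F) :
    (x ^ (2 ^ m + 1)) ^ 2 ^ m = x ^ (2 ^ m + 1) := by
  rw [pow_succ, mul_pow, pow_two_pow_pow_two_pow hcard, mul_comm]

variable [CharP F 2]

theorem exists_pow_two_pow_eq_self_and_sq_add_self_eq {w : F} (hw : w ^ 2 ^ m = w)
    (htr : absTrace m w = 0) : ∃ u, u ^ 2 ^ m = u ∧ u ^ 2 + u = w := by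
  obtain ⟨u, rfl⟩ := exists_sq_add_self_eq_of_absTrace_eq_zero hcard (absTrace_two_mul_eq_zero hw)
  exact ⟨u, CharTwo.add_eq_zero.1 (absTrace_sq_add_self m u ▸ htr), rfl⟩

theorem absTrace_norm_div_one_add_norm_eq_zero {s : F} (hs : s ^ (2 ^ m + 1) ≠ 1) :
    absTrace m ((s ^ 2 ^ m / (1 + s ^ (2 ^ m + 1))) ^ (2 ^ m + 1)) = 0 := by
  set t := s ^ (2 ^ m + 1)
  have htq : t ^ 2 ^ m = t := pow_two_pow_add_one_pow_two_pow hcard s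
  have h1t : 1 + t ≠ 0 := fun h => hs (CharTwo.add_eq_zero.1 h).symm
  have h1tq : (1 + t) ^ 2 ^ m = 1 + t := by rw [add_pow_char_pow, one_pow, htq]
  have hnorm : (s ^ 2 ^ m / (1 + t)) ^ (2 ^ m + 1) = (t / (1 + t)) ^ 2 + t / (1 + t) := by
    rw [div_pow, pow_right_comm, htq, pow_succ, h1tq]
    field_simp
    linear_combination (-t ^ 2) * CharTwo.two_eq_zero (R := F)
  rw [hnorm, absTrace_sq_add_self, div_pow, htq, h1tq, CharTwo.add_self_eq_zero]

theorem exists_eq_div_one_add_norm {c : F} (hc : absTrace m (c ^ (2 ^ m + 1)) = 0) :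
    ∃ s : F, s ^ (2 ^ m + 1) ≠ 1 ∧ c = s ^ 2 ^ m / (1 + s ^ (2 ^ m + 1)) := by
  rcases eq_or_ne c 0 with rfl | hc0
  · exact ⟨0, by simp, by simp⟩
  obtain ⟨u, huq, hu⟩ := exists_pow_two_pow_eq_self_and_sq_add_self_eq hcard
    (pow_two_pow_add_one_pow_two_pow hcard c) hc
  have hu0 : u ≠ 0 := by
    rintro rfl
    exact pow_ne_zero _ hc0 (by rw [← hu]; ring)
  have hnorm : (u / c) ^ (2 ^ m + 1) = u ^ 2 / c ^ (2 ^ m + 1) := by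
    rw [div_pow, pow_succ, huq, sq]
  refine ⟨u / c, ?_, ?_⟩
  · rw [hnorm, ne_eq, div_eq_one_iff_eq (pow_ne_zero _ hc0), ← hu]
    simpa using hu0
  · have hden : 1 + u ^ 2 / c ^ (2 ^ m + 1) = u / c ^ (2 ^ m + 1) := by
      field_simp
      linear_combination -hu + u ^ 2 * CharTwo.two_eq_zero (R := F)
    rw [hnorm, hden, div_pow, huq, pow_succ]
    field_simp

end QuadraticExtension

theorem stmt_3_general (m : ℕ) (F : Type*) [Field F] [Fintype F]
    (hcard : Fintype.card F = 2 ^ (2 * m)) :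
    {c : F | ∑ i ∈ Finset.range m, (c ^ (2 ^ m + 1)) ^ (2 ^ i) = 0} =
      {a : F | ∃ s : F, s ^ (2 ^ m + 1) ≠ 1 ∧
        a = s ^ (2 ^ m) / (1 + s ^ (2 ^ m + 1))} := by
  have := charP_two_of_card_eq_two_pow hcard
  ext c
  refine ⟨exists_eq_div_one_add_norm hcard, ?_⟩
  rintro ⟨s, hs, rfl⟩
  exact absTrace_norm_div_one_add_norm_eq_zero hcard hs

/-- M = N where M is the trace-zero-norm set and N is the image of
s ↦ s^q/(1+s^{q+1}). -/
theorem stmt_3 (m : ℕ) (hm : 0 < m) (F : Type*) [Field F] [Fintype F]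
    (hcard : Fintype.card F = 2 ^ (2 * m)) :
    {c : F | ∑ i ∈ Finset.range m, (c ^ (2 ^ m + 1)) ^ (2 ^ i) = 0} =
      {a : F | ∃ s : F, s ^ (2 ^ m + 1) ≠ 1 ∧
        a = s ^ (2 ^ m) / (1 + s ^ (2 ^ m + 1))} :=
  stmt_3_general m F hcard
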